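/- arXiv:1506.07550 — 6 statements merged into one kernel-verified Lean document; each statement's English description precedes it below -/
import Mathlib

section
/- If ω is a positive semidefinite matrix of the form ω = ∑_I |ψ_I⟩⟨ψ_I| where the entries of each vector ψ_I are polynomials in a complex parameter γ, then det(ω(γ)) = ∑_{I₁,...,I_n} |⟨Ψ₋|ψ_{I₁}⊗···⊗ψ_{I_n}⟩|², a sum of squared absolute values of polynomials in γ; in particular, if det(ω(γ₀)) > 0 for some γ₀, then the set of γ ∈ ℂ with det(ω(γ)) = 0 is contained in the zero set of a nonzero polynomial and hence is a discrete (isolated) subset of ℂ. -/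
open Matrix

/-- The normalized totally antisymmetric vector in `(ℂⁿ)^{⊗n}`. -/
noncomputable def antisymVec' (n : ℕ) : (Fin n → Fin n) → ℂ := fun f =>
  if h : Function.Bijective f then
    ((Equiv.Perm.sign (Equiv.ofBijective f h) : ℤ) : ℂ) / (Real.sqrt n.factorial : ℂ)
  else 0

/-!
Write `ω = A Aᴴ`, where the columns of `A : Matrix (Fin n) ι ℂ` are the vectors `ψ_I`. Expanding
`det (A B)` multilinearly over the choices `F : Fin n → ι` of one column per row and averaging over
the `n!` relabellings `F ∘ σ` gives the symmetric form of Cauchy–Binet,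
`n! det (A B) = ∑_F det A_F det B_F`, so `n! det ω = ∑_F |det A_F|²`. The amplitude
`⟨Ψ₋|ψ_{F 1} ⊗ ⋯ ⊗ ψ_{F n}⟩` is `det A_F / √n!`, a polynomial in `γ`. A sum of squares vanishes
only where every term does, so the zeros of `det ω` lie among the finitely many roots of an
amplitude that does not vanish at `γ₀`.
-/

open Equiv Polynomial Filter Topology

namespace Matrix

theorem sum_vecMulVec_star_eq_mul_conjTranspose {m ι R : Type*} [Fintype ι] [CommRing R]
    [StarRing R] (v : ι → m → R) :
    ∑ i, vecMulVec (v i) (star (v i)) = of (fun k i => v i k) * (of fun k i => v i k)ᴴ := by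
  ext k l
  simp [sum_apply, vecMulVec_apply, mul_apply]

variable {m ι R : Type*} [Fintype m] [DecidableEq m] [Fintype ι] [CommRing R]

theorem det_mul_eq_sum_det_submatrix_mul_prod (A : Matrix m ι R) (B : Matrix ι m R) :
    det (A * B) = ∑ F : m → ι, det (A.submatrix id F) * ∏ i, B (F i) i := by
  simp only [det_apply', mul_apply, Finset.prod_univ_sum, Finset.mul_sum, Fintype.piFinset_univ,
    Finset.sum_mul, submatrix_apply, id, Finset.prod_mul_distrib, mul_assoc]
  exact Finset.sum_comm

theorem det_mul_eq_sum_det_submatrix_mul_sign_mul_prod (A : Matrix m ι R) (B : Matrix ι m R)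
    (σ : Perm m) :
    det (A * B) =
      ∑ F : m → ι, det (A.submatrix id F) * ((Perm.sign σ : ℤ) * ∏ i, B (F i) (σ i)) := by
  rw [det_mul_eq_sum_det_submatrix_mul_prod]
  refine Fintype.sum_equiv (σ.symm.arrowCongr (Equiv.refl ι)) _ _ fun G => ?_
  have hsign : ((Perm.sign σ : ℤ) : R) * (Perm.sign σ : ℤ) = 1 := by
    rw [← Int.cast_mul, ← Units.val_mul, Int.units_mul_self]; simp
  have hA : det (A.submatrix id (G ∘ σ)) = (Perm.sign σ : ℤ) * det (A.submatrix id G) :=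
    det_permute' σ (A.submatrix id G)
  have hB : ∏ i, B (G (σ i)) (σ i) = ∏ i, B (G i) i := Equiv.prod_comp σ fun i => B (G i) i
  change _ = det (A.submatrix id (G ∘ σ)) * (_ * ∏ i, B (G (σ i)) (σ i))
  rw [hA, hB]
  linear_combination (det (A.submatrix id G) * ∏ i, B (G i) i) * hsign.symm

theorem factorial_card_mul_det_mul (A : Matrix m ι R) (B : Matrix ι m R) :
    ((Fintype.card m).factorial : R) * det (A * B) =
      ∑ F : m → ι, det (A.submatrix id F) * det (B.submatrix F id) := by
  calc ((Fintype.card m).factorial : R) * det (A * B)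
      = ∑ σ : Perm m, ∑ F : m → ι,
          det (A.submatrix id F) * ((Perm.sign σ : ℤ) * ∏ i, B (F i) (σ i)) := by
        rw [← Fintype.card_perm, ← nsmul_eq_mul, ← Finset.card_univ, ← Finset.sum_const]
        exact Finset.sum_congr rfl fun σ _ =>
          det_mul_eq_sum_det_submatrix_mul_sign_mul_prod A B σ
    _ = ∑ F : m → ι, det (A.submatrix id F) * det (B.submatrix F id)ᵀ := by
        rw [Finset.sum_comm]
        simp only [det_apply', ← Finset.mul_sum]
        rfl
    _ = _ := by simp only [det_transpose]

theorem factorial_card_mul_det_mul_conjTranspose {𝕜 : Type*} [RCLike 𝕜] (A : Matrix m ι 𝕜) :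
    ((Fintype.card m).factorial : 𝕜) * det (A * Aᴴ) =
      ∑ F : m → ι, ((‖det (A.submatrix id F)‖ ^ 2 : ℝ) : 𝕜) := by
  rw [factorial_card_mul_det_mul]
  refine Finset.sum_congr rfl fun F _ => ?_
  rw [← conjTranspose_submatrix, det_conjTranspose, RCLike.star_def, RCLike.mul_conj]
  push_cast; rfl

end Matrix

theorem sum_conj_antisymVec'_mul_prod {n : ℕ} (M : Matrix (Fin n) (Fin n) ℂ) :
    ∑ f : Fin n → Fin n, starRingEnd ℂ (antisymVec' n f) * ∏ j, M (f j) j =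
      M.det / (Real.sqrt n.factorial : ℂ) := by
  rw [det_apply', Finset.sum_div]
  refine (Fintype.sum_of_injective (⇑) DFunLike.coe_injective _ _ (fun f hf => ?_)
    fun σ => ?_).symm
  · have : ¬ Function.Bijective f := fun hb => hf ⟨Equiv.ofBijective f hb, rfl⟩
    simp only [antisymVec', dif_neg this, map_zero, zero_mul]
  · simp [antisymVec', div_mul_eq_mul_div]

theorem det_sum_vecMulVec_eq_sum_norm_sq {n : ℕ} {ι : Type*} [Fintype ι] (v : ι → Fin n → ℂ) :
    det (∑ I, vecMulVec (v I) (star (v I))) = ∑ F : Fin n → ι,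
      ((‖∑ f : Fin n → Fin n, starRingEnd ℂ (antisymVec' n f) * ∏ j, v (F j) (f j)‖ ^ 2 : ℝ) :
        ℂ) := by
  set A : Matrix (Fin n) ι ℂ := of fun k I => v I k
  have hfac : (n.factorial : ℂ) ≠ 0 := by exact_mod_cast n.factorial_ne_zero
  have hamp (F : Fin n → ι) :
      ∑ f : Fin n → Fin n, starRingEnd ℂ (antisymVec' n f) * ∏ j, v (F j) (f j) =
        det (A.submatrix id F) / (Real.sqrt n.factorial : ℂ) :=
    sum_conj_antisymVec'_mul_prod (A.submatrix id F)
  have hsq (z : ℂ) : ((‖z / (Real.sqrt n.factorial : ℂ)‖ ^ 2 : ℝ) : ℂ) =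
      ((‖z‖ ^ 2 : ℝ) : ℂ) / n.factorial := by
    rw [norm_div, div_pow, Complex.norm_real, Real.norm_eq_abs, sq_abs,
      Real.sq_sqrt (Nat.cast_nonneg _)]
    push_cast; rfl
  simp only [hamp, hsq, ← Finset.sum_div]
  rw [eq_div_iff hfac, mul_comm, sum_vecMulVec_star_eq_mul_conjTranspose]
  have h := factorial_card_mul_det_mul_conjTranspose A
  rw [Fintype.card_fin] at h
  exact h

theorem exists_eval_eq_det {m R : Type*} [Fintype m] [DecidableEq m] [CommRing R]
    (M : R → Matrix m m R) (hM : ∀ i j, ∃ p : R[X], ∀ x, M x i j = p.eval x) :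
    ∃ p : R[X], ∀ x, (M x).det = p.eval x := by
  choose P hP using hM
  refine ⟨(of P).det, fun x => ?_⟩
  rw [← coe_evalRingHom, RingHom.map_det]
  congr 1
  ext i j
  simp [hP]

theorem RCLike.sum_norm_sq_eq_zero_iff {𝕜 κ : Type*} [RCLike 𝕜] [Fintype κ] (a : κ → 𝕜) :
    ∑ k, ((‖a k‖ ^ 2 : ℝ) : 𝕜) = 0 ↔ ∀ k, a k = 0 := by
  rw [← RCLike.ofReal_sum, RCLike.ofReal_eq_zero,
    Finset.sum_eq_zero_iff_of_nonneg fun k _ => by positivity]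
  simp

theorem exists_ne_zero_forall_eval_eq_zero_of_eq_sum_norm_sq {𝕜 κ : Type*} [RCLike 𝕜] [Fintype κ]
    {g : 𝕜 → 𝕜} (q : κ → 𝕜[X]) (hg : ∀ x, g x = ∑ k, ((‖(q k).eval x‖ ^ 2 : ℝ) : 𝕜))
    {x₀ : 𝕜} (h₀ : g x₀ ≠ 0) :
    ∃ p : 𝕜[X], p ≠ 0 ∧ ∀ x, g x = 0 → p.eval x = 0 := by
  obtain ⟨k, hk⟩ : ∃ k, (q k).eval x₀ ≠ 0 := by
    by_contra! h
    exact h₀ ((hg x₀).trans ((RCLike.sum_norm_sq_eq_zero_iff _).2 h))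
  refine ⟨q k, fun h => hk (by simp [h]), fun x hx => ?_⟩
  rw [hg, RCLike.sum_norm_sq_eq_zero_iff] at hx
  exact hx k

theorem Polynomial.eventually_nhdsNE_eval_ne_zero {R : Type*} [CommRing R] [IsDomain R]
    [TopologicalSpace R] [T1Space R] {p : R[X]} (hp : p ≠ 0) (x : R) :
    ∀ᶠ y in 𝓝[≠] x, p.eval y ≠ 0 := by
  filter_upwards [nhdsNE_of_nhdsNE_sdiff_finite (x := x) Filter.univ_mem
    (finite_setOfPred_isRoot hp).to_subtype] with y hy
  exact hy.2

/-- If `ω(γ) = ∑_I |ψ_I(γ)⟩⟨ψ_I(γ)|` with polynomially-varying vectors `ψ_I`, then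
`det ω(γ) = ∑_{I₁,…,I_n} |⟨Ψ₋|ψ_{I₁}⊗⋯⊗ψ_{I_n}⟩|²`, a sum of squared absolute values of
polynomials in `γ`; hence if `det ω(γ₀) > 0` for some `γ₀`, the zero set of `γ ↦ det ω(γ)`
is contained in the zero set of a nonzero polynomial and consists of isolated points. -/
theorem det_sum_squares_and_isolated_zeros (n : ℕ) (ι : Type) [Fintype ι]
    (ψ : ι → ℂ → (Fin n → ℂ))
    (hpoly : ∀ I k, ∃ p : Polynomial ℂ, ∀ γ, ψ I γ k = p.eval γ)
    (ω : ℂ → Matrix (Fin n) (Fin n) ℂ)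
    (hω : ∀ γ, ω γ = ∑ I, Matrix.vecMulVec (ψ I γ) (star (ψ I γ))) :
    (∀ γ, (ω γ).det = ∑ F : Fin n → ι,
      ((‖∑ f : Fin n → Fin n,
          (starRingEnd ℂ) (antisymVec' n f) * ∏ j, ψ (F j) γ (f j)‖ ^ 2 : ℝ) : ℂ)) ∧
    (∀ γ₀ : ℂ, 0 < ((ω γ₀).det).re →
      (∃ p : Polynomial ℂ, p ≠ 0 ∧ ∀ γ, (ω γ).det = 0 → p.eval γ = 0) ∧
      (∀ γ, (ω γ).det = 0 → ∃ ε > (0:ℝ), ∀ γ', γ' ≠ γ →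
        ‖γ' - γ‖ < ε → (ω γ').det ≠ 0)) := by
  have hdet : ∀ γ, _ := fun γ => hω γ ▸ det_sum_vecMulVec_eq_sum_norm_sq (ψ · γ)
  refine ⟨hdet, fun γ₀ h₀ => ?_⟩
  have hamp (F : Fin n → ι) : ∃ q : ℂ[X], ∀ γ,
      ∑ f : Fin n → Fin n, starRingEnd ℂ (antisymVec' n f) * ∏ j, ψ (F j) γ (f j) = q.eval γ := by
    obtain ⟨q, hq⟩ := exists_eval_eq_det (fun γ => of fun k j => ψ (F j) γ k)
      fun k j => hpoly (F j) k
    refine ⟨C (Real.sqrt n.factorial : ℂ)⁻¹ * q, fun γ => ?_⟩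
    rw [eval_mul, eval_C, ← hq, inv_mul_eq_div]
    exact sum_conj_antisymVec'_mul_prod (of fun k j => ψ (F j) γ k)
  choose q hq using hamp
  simp only [hq] at hdet
  obtain ⟨p, hp0, hp⟩ := exists_ne_zero_forall_eval_eq_zero_of_eq_sum_norm_sq q hdet
    (x₀ := γ₀) fun h => h₀.ne' (by rw [h, Complex.zero_re])
  refine ⟨⟨p, hp0, hp⟩, fun γ _ => ?_⟩
  obtain ⟨ε, hε, hball⟩ := Metric.eventually_nhds_iff.1
    (eventually_nhdsWithin_iff.1 (eventually_nhdsNE_eval_ne_zero hp0 γ))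
  exact ⟨ε, hε, fun γ' hne hlt hzero =>
    hball (by rwa [dist_eq_norm]) hne (hp γ' hzero)⟩
end

section
/- The set of primitive completely positive maps of fixed Kraus rank r on M_D(ℂ) is a relatively open subset of the set of all CP maps of Kraus rank r: if T is primitive with Kraus rank r, then every CP map of Kraus rank r sufficiently close to T (in any norm on the space of linear maps) is also primitive. -/
/-!
Realignment turns the Choi matrix of `T` into the matrix of `T` in the basis of matrix units,
where composition becomes matrix multiplication. Hence the Choi matrix of `Tⁿ` is a polynomial,
in particular continuous, function of the Choi matrix of `T`, and having full rank `D²` is the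
open condition `det ≠ 0`.
-/

open Matrix

/-- The Choi matrix of a linear map on `M_D(ℂ)`. -/
def choiMatrix {D : ℕ} (T : Module.End ℂ (Matrix (Fin D) (Fin D) ℂ)) :
    Matrix (Fin D × Fin D) (Fin D × Fin D) ℂ :=
  Matrix.of fun p q => T (Matrix.single p.2 q.2 1) p.1 q.1

/-- Complete positivity: `T` admits a Kraus representation. -/
def IsCPMap {D : ℕ} (T : Module.End ℂ (Matrix (Fin D) (Fin D) ℂ)) : Prop :=
  ∃ (r : ℕ) (A : Fin r → Matrix (Fin D) (Fin D) ℂ), ∀ X, T X = ∑ i, A i * X * (A i)ᴴ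

/-- Primitivity: some power of `T` has full Kraus rank `D²`. -/
def IsPrimitive {D : ℕ} (T : Module.End ℂ (Matrix (Fin D) (Fin D) ℂ)) : Prop :=
  ∃ n : ℕ, (choiMatrix (T ^ n)).rank = D ^ 2

open Topology

namespace Matrix

theorem isUnit_of_rank_eq_card {m K : Type*} [Fintype m] [DecidableEq m] [Field K]
    {A : Matrix m m K} (h : A.rank = Fintype.card m) : IsUnit A := by
  refine mulVec_surjective_iff_isUnit.mp (LinearMap.range_eq_top (f := A.mulVecLin).mp ?_)
  exact Submodule.eq_top_of_finrank_eq (by rw [← rank, h, Module.finrank_fintype_fun_eq_card])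

theorem rank_eq_card_iff_det_ne_zero {m K : Type*} [Fintype m] [DecidableEq m] [Field K]
    {A : Matrix m m K} : A.rank = Fintype.card m ↔ A.det ≠ 0 :=
  ⟨fun h => ((isUnit_iff_isUnit_det A).mp (isUnit_of_rank_eq_card h)).ne_zero,
    rank_of_det_ne_zero⟩

theorem isOpen_setOf_rank_eq_card {m K : Type*} [Fintype m] [DecidableEq m] [Field K]
    [TopologicalSpace K] [IsTopologicalRing K] [T1Space K] :
    IsOpen {A : Matrix m m K | A.rank = Fintype.card m} := by
  simp only [rank_eq_card_iff_det_ne_zero]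
  exact isOpen_compl_singleton.preimage continuous_id.matrix_det

theorem exists_entrywise_lt_of_eventually_nhds {m n α : Type*} [Fintype m] [Fintype n]
    [SeminormedAddCommGroup α] {P : Matrix m n α → Prop} {M : Matrix m n α}
    (h : ∀ᶠ N in 𝓝 M, P N) : ∃ ε > (0 : ℝ), ∀ N, (∀ i j, ‖N i j - M i j‖ < ε) → P N := by
  let := Matrix.seminormedAddCommGroup (m := m) (n := n) (α := α)
  obtain ⟨ε, hε, hP⟩ := Metric.eventually_nhds_iff.mp h
  exact ⟨ε, hε, fun N hN => hP ((dist_eq_norm N M).trans_lt ((norm_lt_iff hε).2 hN))⟩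

def realign {l m n o α : Type*} (M : Matrix (l × m) (n × o) α) : Matrix (l × n) (m × o) α :=
  of fun p q => M (p.1, q.1) (p.2, q.2)

theorem continuous_realign {l m n o α : Type*} [TopologicalSpace α] :
    Continuous (realign : Matrix (l × m) (n × o) α → Matrix (l × n) (m × o) α) := by
  unfold realign; fun_prop

end Matrix

section Choi

variable {D : ℕ}

theorem realign_choiMatrix (S : Module.End ℂ (Matrix (Fin D) (Fin D) ℂ)) :
    realign (choiMatrix S) = LinearMap.toMatrixAlgEquiv (stdBasis ℂ (Fin D) (Fin D)) S := by
  ext p q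
  rw [LinearMap.toMatrixAlgEquiv_apply, stdBasis_eq_single]
  simp [realign, choiMatrix, stdBasis]

theorem choiMatrix_pow (S : Module.End ℂ (Matrix (Fin D) (Fin D) ℂ)) (n : ℕ) :
    choiMatrix (S ^ n) = realign (realign (choiMatrix S) ^ n) := by
  rw [realign_choiMatrix, ← map_pow, ← realign_choiMatrix]
  rfl

end Choi

theorem primitive_relatively_open_general (D r : ℕ)
    (T : Module.End ℂ (Matrix (Fin D) (Fin D) ℂ))
    (hTprim : IsPrimitive T) :
    ∃ ε > (0:ℝ), ∀ S : Module.End ℂ (Matrix (Fin D) (Fin D) ℂ),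
      IsCPMap S → (choiMatrix S).rank = r →
      (∀ p q, ‖choiMatrix S p q - choiMatrix T p q‖ < ε) →
      IsPrimitive S := by
  obtain ⟨n, hn⟩ := hTprim
  have hcard : Fintype.card (Fin D × Fin D) = D ^ 2 := by simp [sq]
  have hopen : IsOpen {M : Matrix (Fin D × Fin D) (Fin D × Fin D) ℂ |
      (realign (realign M ^ n)).rank = D ^ 2} := by
    rw [← hcard]
    exact isOpen_setOf_rank_eq_card.preimage
      (continuous_realign.comp ((continuous_pow n).comp continuous_realign))
  obtain ⟨ε, hε, hclose⟩ :=
    exists_entrywise_lt_of_eventually_nhds (hopen.mem_nhds (by rwa [choiMatrix_pow] at hn))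
  refine ⟨ε, hε, fun S _ _ hS => ⟨n, ?_⟩⟩
  rw [choiMatrix_pow]
  exact hclose _ hS

/-- The primitive CP maps of fixed Kraus rank `r` form a relatively open subset of the CP
maps of Kraus rank `r`: every CP map of Kraus rank `r` sufficiently close (entrywise on
the level of the maps, equivalently in any norm) to a primitive one is itself primitive. -/
theorem primitive_relatively_open (D r : ℕ) (hD : 2 ≤ D) (hr : 2 ≤ r)
    (T : Module.End ℂ (Matrix (Fin D) (Fin D) ℂ))
    (hTcp : IsCPMap T) (hTrank : (choiMatrix T).rank = r) (hTprim : IsPrimitive T) :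
    ∃ ε > (0:ℝ), ∀ S : Module.End ℂ (Matrix (Fin D) (Fin D) ℂ),
      IsCPMap S → (choiMatrix S).rank = r →
      (∀ p q, ‖choiMatrix S p q - choiMatrix T p q‖ < ε) →
      IsPrimitive S :=
  primitive_relatively_open_general D r T hTprim
end

section
/- The set of primitive CP maps of fixed Kraus rank r is dense in the set of all CP maps of Kraus rank r on M_D(ℂ), for r, D ≥ 2. -/
/-!
A CP map of Kraus rank `r` is `krausMap A` for a family `A` of exactly `r` Kraus operators
(spectral decomposition of its Choi matrix). Let `B` be the family consisting of the cyclic shift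
`S`, the matrix unit `E₀₀` and zeros: every matrix unit is a word `S^i E₀₀^m S^(-j)` of length
`2D - 1`, so `krausMap B` is primitive. Along `A + t • (B - A)` the determinant of the Choi matrix
of the `(2D - 1)`-st power is real-analytic in `t` and nonzero at `t = 1`, so it vanishes only at
isolated points; near `t = 0` the Gram determinant of the Kraus operators stays nonzero (Kraus rank
stays `r`) and the Choi matrix stays `ε`-close to that of `T`.
-/

open Matrix

open Filter Topology
open scoped ComplexOrder

lemma Matrix.PosSemidef.exists_eq_mul_conjTranspose {𝕜 m : Type*} [RCLike 𝕜] [Fintype m]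
    [DecidableEq m] {N : Matrix m m 𝕜} (hN : N.PosSemidef) :
    ∃ W : Matrix m (Fin N.rank) 𝕜, N = W * Wᴴ := by
  set ev := hN.1.eigenvalues
  set U : Matrix m m 𝕜 := (hN.1.eigenvectorUnitary : Matrix m m 𝕜)
  let e : Fin N.rank ≃ {j // ev j ≠ 0} :=
    Fintype.equivFinOfCardEq hN.1.rank_eq_card_non_zero_eigs.symm |>.symm
  refine ⟨of fun p k => U p (e k) * (√(ev (e k)) : 𝕜), ?_⟩
  ext p q
  set g : m → 𝕜 := fun j => U p j * ev j * star (U q j)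
  have hsqrt (j) : (√(ev j) : 𝕜) * (√(ev j) : 𝕜) = ev j := by
    rw [← RCLike.ofReal_mul, Real.mul_self_sqrt (hN.eigenvalues_nonneg j)]
  calc N p q = ∑ j, g j := by
        conv_lhs => rw [hN.1.spectral_theorem, Unitary.conjStarAlgAut_apply]
        rw [mul_apply]
        simp only [mul_diagonal, star_apply, Function.comp_apply]
        rfl
    _ = ∑ j with ev j ≠ 0, g j :=
        (Finset.sum_filter_of_ne (p := (ev · ≠ 0)) fun j _ hg h => hg (by simp [g, h])).symm
    _ = ∑ j : {j // ev j ≠ 0}, g j := Finset.sum_subtype _ (by simp) g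
    _ = ∑ k, g (e k) := (e.sum_comp (fun j => g j)).symm
    _ = _ := by
      simp only [mul_apply, conjTranspose_apply, of_apply, star_mul', RCLike.star_def,
        RCLike.conj_ofReal]
      refine Finset.sum_congr rfl fun k _ => ?_
      simp only [g, ← hsqrt, RCLike.star_def]
      ring

lemma Matrix.rank_eq_card_iff_det_ne_zero_s9 {K n : Type*} [Field K] [Fintype n] [DecidableEq n]
    (M : Matrix n n K) : M.rank = Fintype.card n ↔ M.det ≠ 0 := by
  rw [← isUnit_iff_ne_zero, ← isUnit_iff_isUnit_det, ← mulVec_surjective_iff_isUnit, rank,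
    ← Module.finrank_fintype_fun_eq_card (R := K), ← Submodule.eq_top_iff_finrank_eq,
    LinearMap.range_eq_top]
  rfl

@[fun_prop]
lemma AnalyticAt.star {E : Type*} [NormedAddCommGroup E] [NormedSpace ℝ E] {f : E → ℂ} {x : E}
    (hf : AnalyticAt ℝ f x) : AnalyticAt ℝ (fun y => star (f y)) x :=
  (Complex.conjCLE.toContinuousLinearMap.analyticAt _).comp hf

lemma AnalyticAt.matrix_det {𝕜 E A n : Type*} [NontriviallyNormedField 𝕜] [NormedAddCommGroup E]
    [NormedSpace 𝕜 E] [NormedCommRing A] [NormedAlgebra 𝕜 A] [Fintype n] [DecidableEq n]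
    {M : E → Matrix n n A} {x : E} (hM : ∀ i j, AnalyticAt 𝕜 (fun y => M y i j) x) :
    AnalyticAt 𝕜 (fun y => (M y).det) x := by
  simp only [det_apply, Units.smul_def, zsmul_eq_mul]
  fun_prop

lemma AnalyticOnNhd.eventually_nhdsNE_ne_zero {𝕜 E : Type*} [NontriviallyNormedField 𝕜]
    [NormedAddCommGroup E] [NormedSpace 𝕜 E] {f : 𝕜 → E} {U : Set 𝕜} {z₀ z₁ : 𝕜}
    (hf : AnalyticOnNhd 𝕜 f U) (hU : IsPreconnected U) (h₀ : z₀ ∈ U) (h₁ : z₁ ∈ U)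
    (hz₁ : f z₁ ≠ 0) : ∀ᶠ z in 𝓝[≠] z₀, f z ≠ 0 := by
  by_contra h
  refine hz₁ (hf.eqOn_zero_of_preconnected_of_frequently_eq_zero hU h₀ ?_ h₁)
  simpa [Filter.not_eventually] using h

section Words

variable {D : ℕ} {ι : Type*}

def wordProd (A : ι → Matrix (Fin D) (Fin D) ℂ) {n : ℕ} (w : Fin n → ι) :
    Matrix (Fin D) (Fin D) ℂ :=
  ((List.ofFn w).map A).prod

lemma wordProd_append (A : ι → Matrix (Fin D) (Fin D) ℂ) {m n : ℕ} (u : Fin m → ι)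
    (v : Fin n → ι) : wordProd A (Fin.append u v) = wordProd A u * wordProd A v := by
  simp [wordProd, List.ofFn_fin_append]

lemma wordProd_const (A : ι → Matrix (Fin D) (Fin D) ℂ) (n : ℕ) (i : ι) :
    wordProd A (fun _ : Fin n => i) = A i ^ n := by
  simp [wordProd, List.ofFn_const]

lemma wordProd_comp_cast (A : ι → Matrix (Fin D) (Fin D) ℂ) {m n : ℕ} (h : m = n)
    (w : Fin n → ι) : wordProd A (w ∘ Fin.cast h) = wordProd A w := by
  subst h; rfl

end Words

section Kraus

variable {D : ℕ} {ι : Type*} [Fintype ι]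

noncomputable def krausMap (A : ι → Matrix (Fin D) (Fin D) ℂ) :
    Module.End ℂ (Matrix (Fin D) (Fin D) ℂ) where
  toFun X := ∑ i, A i * X * (A i)ᴴ
  map_add' X Y := by simp [Matrix.mul_add, Matrix.add_mul, Finset.sum_add_distrib]
  map_smul' c X := by simp [Finset.smul_sum]

lemma krausMap_apply (A : ι → Matrix (Fin D) (Fin D) ℂ) (X : Matrix (Fin D) (Fin D) ℂ) :
    krausMap A X = ∑ i, A i * X * (A i)ᴴ := rfl

lemma isCPMap_krausMap {r : ℕ} (A : Fin r → Matrix (Fin D) (Fin D) ℂ) : IsCPMap (krausMap A) :=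
  ⟨r, A, fun _ => rfl⟩

def krausMatrix (A : ι → Matrix (Fin D) (Fin D) ℂ) : Matrix (Fin D × Fin D) ι ℂ :=
  of fun p i => A i p.1 p.2

lemma choiMatrix_krausMap (A : ι → Matrix (Fin D) (Fin D) ℂ) :
    choiMatrix (krausMap A) = krausMatrix A * (krausMatrix A)ᴴ := by
  ext p q
  simp [choiMatrix, krausMatrix, krausMap_apply, mul_apply, Matrix.sum_apply, single_apply,
    ite_and]

lemma rank_choiMatrix_krausMap (A : ι → Matrix (Fin D) (Fin D) ℂ) :
    (choiMatrix (krausMap A)).rank = (krausMatrix A).rank := by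
  rw [choiMatrix_krausMap, rank_self_mul_conjTranspose]

lemma choiMatrix_injective : Function.Injective (choiMatrix (D := D)) := by
  intro S T h
  refine (Matrix.stdBasis ℂ (Fin D) (Fin D)).ext fun ⟨a, b⟩ => ?_
  ext x y
  simpa [stdBasis_eq_single, choiMatrix] using congrFun (congrFun h (x, a)) (y, b)

lemma IsCPMap.exists_eq_krausMap {r : ℕ} {T : Module.End ℂ (Matrix (Fin D) (Fin D) ℂ)}
    (hT : IsCPMap T) (hr : (choiMatrix T).rank = r) :
    ∃ A : Fin r → Matrix (Fin D) (Fin D) ℂ, T = krausMap A := by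
  subst hr
  obtain ⟨n, B, hB⟩ := hT
  have hpsd : (choiMatrix T).PosSemidef := by
    rw [show T = krausMap B from LinearMap.ext hB, choiMatrix_krausMap]
    exact posSemidef_self_mul_conjTranspose _
  obtain ⟨W, hW⟩ := hpsd.exists_eq_mul_conjTranspose
  refine ⟨fun k => of fun i j => W (i, j) k, choiMatrix_injective ?_⟩
  rw [choiMatrix_krausMap]
  exact hW

lemma krausMap_pow (A : ι → Matrix (Fin D) (Fin D) ℂ) (n : ℕ) :
    krausMap A ^ n = krausMap fun w : Fin n → ι => wordProd A w := by
  induction n with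
  | zero => ext X : 1; simp [krausMap_apply, wordProd]
  | succ n ih =>
    ext X : 1
    rw [pow_succ', Module.End.mul_apply, ih, krausMap_apply, krausMap_apply, krausMap_apply,
      ← (Fin.consEquiv fun _ => ι).sum_comp, Fintype.sum_prod_type]
    simp only [Matrix.mul_sum, Matrix.sum_mul, Fin.consEquiv_apply, wordProd, List.ofFn_succ,
      Fin.cons_zero, Fin.cons_succ, List.map_cons, List.prod_cons, conjTranspose_mul,
      Matrix.mul_assoc]

lemma rank_krausMatrix (A : ι → Matrix (Fin D) (Fin D) ℂ) :
    (krausMatrix A).rank = Module.finrank ℂ (Submodule.span ℂ (Set.range A)) := by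
  let vec := (ofLinearEquiv ℂ).symm.trans (LinearEquiv.curry ℂ ℂ (Fin D) (Fin D)).symm
  have : (krausMatrix A).col = vec.toLinearMap ∘ A := rfl
  rw [rank_eq_finrank_span_cols, this, Set.range_comp, Submodule.span_image]
  exact LinearEquiv.finrank_map_eq vec _

lemma rank_choiMatrix_krausMap_of_forall_single_mem_range {A : ι → Matrix (Fin D) (Fin D) ℂ}
    (hA : ∀ i j, single i j 1 ∈ Set.range A) :
    (choiMatrix (krausMap A)).rank = D ^ 2 := by
  have hspan : Submodule.span ℂ (Set.range A) = ⊤ := by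
    refine eq_top_mono (Submodule.span_mono ?_) (Matrix.stdBasis ℂ (Fin D) (Fin D)).span_eq
    rintro _ ⟨⟨i, j⟩, rfl⟩
    simpa [stdBasis_eq_single] using hA i j
  rw [rank_choiMatrix_krausMap, rank_krausMatrix, hspan, finrank_top, Module.finrank_matrix]
  simp [sq]

end Kraus

section CyclicShift

def cyclicShift (D : ℕ) [NeZero D] : Matrix (Fin D) (Fin D) ℂ :=
  of fun x y => if x = y + 1 then 1 else 0

def primitiveKrausFamily (D r : ℕ) [NeZero D] : Fin r → Matrix (Fin D) (Fin D) ℂ :=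
  fun k => if k.val = 0 then cyclicShift D else if k.val = 1 then single 0 0 1 else 0

variable {D : ℕ} [NeZero D]
open Fin.NatCast

lemma cyclicShift_mul_single (i j : Fin D) :
    cyclicShift D * single i j 1 = single (i + 1) j 1 := by
  ext x y
  by_cases hj : j = y <;> simp [cyclicShift, mul_apply, single_apply, hj, eq_comm (a := x)]

lemma single_mul_cyclicShift (i j : Fin D) :
    single i j 1 * cyclicShift D = single i (j - 1) 1 := by
  ext x y
  simp [cyclicShift, mul_apply, single_apply, sub_eq_iff_eq_add]

lemma cyclicShift_pow_mul_single (a : ℕ) (i j : Fin D) :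
    cyclicShift D ^ a * single i j 1 = single (i + a) j 1 := by
  induction a with
  | zero => simp
  | succ a ih =>
    rw [pow_succ', Matrix.mul_assoc, ih, cyclicShift_mul_single, Nat.cast_succ, add_assoc]

lemma single_mul_cyclicShift_pow (b : ℕ) (i j : Fin D) :
    single i j 1 * cyclicShift D ^ b = single i (j - b) 1 := by
  induction b with
  | zero => simp
  | succ b ih =>
    rw [pow_succ, ← Matrix.mul_assoc, ih, single_mul_cyclicShift, Nat.cast_succ, sub_sub]

-- `E_ij = S^i E₀₀^m S^(-j)`, padded by `m ≥ 1` to a length independent of `i, j`.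
lemma single_mem_range_wordProd_primitiveKrausFamily {r : ℕ} (hr : 2 ≤ r) (i j : Fin D) :
    single i j 1 ∈ Set.range fun w : Fin (2 * D - 1) → Fin r =>
      wordProd (primitiveKrausFamily D r) w := by
  set a := (i : ℕ)
  set b := ((-j : Fin D) : ℕ)
  have hlen : a + (2 * D - 1 - a - b) + b = 2 * D - 1 := by omega
  have hE : IsIdempotentElem (single (0 : Fin D) (0 : Fin D) (1 : ℂ)) := by
    simp [IsIdempotentElem, single_mul_single_same]
  refine ⟨Fin.append (Fin.append (fun _ => ⟨0, by omega⟩) fun _ => ⟨1, by omega⟩)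
    (fun _ => ⟨0, by omega⟩) ∘ Fin.cast hlen.symm, ?_⟩
  simp only [wordProd_comp_cast, wordProd_append, wordProd_const, primitiveKrausFamily,
    if_true, one_ne_zero, if_false]
  rw [hE.pow_eq (by omega), cyclicShift_pow_mul_single, single_mul_cyclicShift_pow]
  simp [a, b]

lemma isPrimitive_krausMap_primitiveKrausFamily {r : ℕ} (hr : 2 ≤ r) :
    IsPrimitive (krausMap (primitiveKrausFamily D r)) :=
  ⟨2 * D - 1, by
    rw [krausMap_pow]
    exact rank_choiMatrix_krausMap_of_forall_single_mem_range
      (single_mem_range_wordProd_primitiveKrausFamily hr)⟩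

end CyclicShift

section Analytic

variable {D : ℕ} {ι : Type*} [Fintype ι]

lemma analyticAt_krausMap_pow_apply {E : Type*} [NormedAddCommGroup E] [NormedSpace ℝ E]
    {A : E → ι → Matrix (Fin D) (Fin D) ℂ} {x₀ : E}
    (hA : ∀ i x y, AnalyticAt ℝ (fun t => A t i x y) x₀) (n : ℕ) (X : Matrix (Fin D) (Fin D) ℂ)
    (x y : Fin D) : AnalyticAt ℝ (fun t => (krausMap (A t) ^ n) X x y) x₀ := by
  induction n generalizing x y with
  | zero => simpa using analyticAt_const
  | succ n ih =>
    simp only [pow_succ', Module.End.mul_apply, krausMap_apply, Matrix.sum_apply, mul_apply,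
      conjTranspose_apply]
    fun_prop

lemma eventually_isPrimitive_krausMap {A : ℝ → ι → Matrix (Fin D) (Fin D) ℂ}
    (hA : ∀ i x y, AnalyticOnNhd ℝ (fun t => A t i x y) Set.univ) {t₁ : ℝ}
    (h₁ : IsPrimitive (krausMap (A t₁))) (t₀ : ℝ) :
    ∀ᶠ t in 𝓝[≠] t₀, IsPrimitive (krausMap (A t)) := by
  obtain ⟨n, hn⟩ := h₁
  have hcard : Fintype.card (Fin D × Fin D) = D ^ 2 := by simp [sq]
  have hdet : AnalyticOnNhd ℝ (fun t => (choiMatrix (krausMap (A t) ^ n)).det) Set.univ :=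
    fun t _ => AnalyticAt.matrix_det fun p q =>
      analyticAt_krausMap_pow_apply (fun i x y => hA i x y t trivial) n _ _ _
  have hn' : (choiMatrix (krausMap (A t₁) ^ n)).det ≠ 0 := by
    rwa [← rank_eq_card_iff_det_ne_zero_s9, hcard]
  filter_upwards [hdet.eventually_nhdsNE_ne_zero isPreconnected_univ trivial trivial hn']
    with t ht
  exact ⟨n, hcard ▸ (rank_eq_card_iff_det_ne_zero_s9 _).2 ht⟩

end Analytic

section Continuity

variable {X : Type*} [TopologicalSpace X] {D : ℕ} {ι : Type*}

lemma continuous_krausMatrix {A : X → ι → Matrix (Fin D) (Fin D) ℂ}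
    (hA : ∀ i x y, Continuous fun t => A t i x y) : Continuous fun t => krausMatrix (A t) :=
  continuous_matrix fun p i => hA i p.1 p.2

lemma continuous_choiMatrix_krausMap [Fintype ι] {A : X → ι → Matrix (Fin D) (Fin D) ℂ}
    (hA : ∀ i x y, Continuous fun t => A t i x y) :
    Continuous fun t => choiMatrix (krausMap (A t)) := by
  simp only [choiMatrix_krausMap]
  have := continuous_krausMatrix hA
  fun_prop

lemma eventually_rank_choiMatrix_krausMap {r : ℕ} {A : X → Fin r → Matrix (Fin D) (Fin D) ℂ}
    (hA : ∀ i x y, Continuous fun t => A t i x y) {x₀ : X}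
    (h₀ : (choiMatrix (krausMap (A x₀))).rank = r) :
    ∀ᶠ t in 𝓝 x₀, (choiMatrix (krausMap (A t))).rank = r := by
  have hgram (t) : (choiMatrix (krausMap (A t))).rank = r ↔
      ((krausMatrix (A t))ᴴ * krausMatrix (A t)).det ≠ 0 := by
    rw [← rank_eq_card_iff_det_ne_zero_s9, rank_conjTranspose_mul_self, rank_choiMatrix_krausMap,
      Fintype.card_fin]
  have hcont : Continuous fun t => ((krausMatrix (A t))ᴴ * krausMatrix (A t)).det := by
    have := continuous_krausMatrix hA
    fun_prop
  simp only [hgram] at h₀ ⊢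
  exact hcont.continuousAt.eventually_ne h₀

end Continuity

/-- The primitive CP maps of Kraus rank `r` are dense in the CP maps of Kraus rank `r` on
`M_D(ℂ)`, for `r, D ≥ 2`: arbitrarily close (entrywise, equivalently in any norm) to any
CP map of Kraus rank `r` there is a primitive CP map of Kraus rank `r`. -/
theorem primitive_dense_in_cp_fixed_rank (D r : ℕ) (hD : 2 ≤ D) (hr : 2 ≤ r)
    (T : Module.End ℂ (Matrix (Fin D) (Fin D) ℂ))
    (hTcp : IsCPMap T) (hTrank : (choiMatrix T).rank = r) :
    ∀ ε > (0:ℝ), ∃ S : Module.End ℂ (Matrix (Fin D) (Fin D) ℂ),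
      IsCPMap S ∧ (choiMatrix S).rank = r ∧ IsPrimitive S ∧
      (∀ p q, ‖choiMatrix S p q - choiMatrix T p q‖ < ε) := by
  intro ε hε
  have : NeZero D := ⟨by omega⟩
  obtain ⟨A, rfl⟩ := hTcp.exists_eq_krausMap hTrank
  let B := primitiveKrausFamily D r
  let C : ℝ → Fin r → Matrix (Fin D) (Fin D) ℂ := fun t i => A i + t • (B i - A i)
  have hCan (i x y) : AnalyticOnNhd ℝ (fun t => C t i x y) Set.univ := by
    intro t _
    simp only [C, Matrix.add_apply, Matrix.smul_apply]
    fun_prop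
  have hCcont (i x y) : Continuous fun t => C t i x y :=
    continuousOn_univ.1 (hCan i x y).continuousOn
  have hC0 : C 0 = A := by simp [C]
  have hC1 : C 1 = B := by simp [C]
  have hprim := eventually_isPrimitive_krausMap hCan
    (by rw [hC1]; exact isPrimitive_krausMap_primitiveKrausFamily hr) 0
  have hrank := eventually_rank_choiMatrix_krausMap hCcont (x₀ := 0) (hC0 ▸ hTrank)
  have hclose : ∀ᶠ t in 𝓝 0, ∀ p q,
      ‖choiMatrix (krausMap (C t)) p q - choiMatrix (krausMap A) p q‖ < ε := by
    simp only [eventually_all, ← dist_eq_norm]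
    intro p q
    have := ((continuous_choiMatrix_krausMap hCcont).matrix_elem p q).tendsto 0
    rw [hC0] at this
    exact Metric.tendsto_nhds.1 this ε hε
  obtain ⟨t, htprim, htrank, htclose⟩ :=
    (hprim.and ((hrank.and hclose).filter_mono nhdsWithin_le_nhds)).exists
  exact ⟨krausMap (C t), isCPMap_krausMap _, htrank, htprim, htclose⟩
end

section
/- Let T(X) = ∑_i A_i† X A_i be an irreducible unital CP map on M_D(ℂ) with peripheral eigenvalue β = e^{2πi/m} and unitary eigenvector U = ∑_{k=1}^m β^k P_k (spectral projectors P_k). Then the Kraus operators satisfy the intertwining relation A_i P_{k−1} = P_k A_i for all i and k (indices mod m). -/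
open Matrix ComplexOrder

/-- Irreducibility: the spectral radius `μ` is a simple (algebraic multiplicity one)
eigenvalue with positive definite right and left eigenvectors. -/
def IsIrreducibleMap {D : ℕ} (T : Module.End ℂ (Matrix (Fin D) (Fin D) ℂ)) : Prop :=
  ∃ μ : ℝ, (μ : ℂ) ∈ spectrum ℂ T ∧
    (∀ z ∈ spectrum ℂ T, ‖z‖ ≤ μ) ∧
    Module.finrank ℂ (T.maxGenEigenspace (μ : ℂ)) = 1 ∧
    (∃ ρ : Matrix (Fin D) (Fin D) ℂ, ρ.PosDef ∧ T ρ = (μ : ℂ) • ρ) ∧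
    (∃ σ : Matrix (Fin D) (Fin D) ℂ, σ.PosDef ∧
      ∀ X, (σ * T X).trace = (μ : ℂ) * (σ * X).trace)

/-! The Kraus operators twisted-commute with `U`: for `Bᵢ = U Aᵢ - β Aᵢ U`, unitality of `T`,
the eigen-equations `T U = β U`, `T U† = β̄ U†` and `|β| = 1` give `∑ Bᵢ† Bᵢ = 0`, hence every
`Bᵢ = 0`. Sandwiching `U Aᵢ = β Aᵢ U` between spectral projectors gives
`(βᵏ - β^{l+1}) Pₖ Aᵢ Pₗ = 0`, so `Pₖ Aᵢ Pₗ = 0` unless `k = l + 1`, as `β` is a primitive `m`-th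
root of unity. Inserting `∑ Pₗ = 1` on either side of `Aᵢ` then yields
`Aᵢ P_{k-1} = Pₖ Aᵢ P_{k-1} = Pₖ Aᵢ`. -/

open scoped MatrixOrder in
lemma Matrix.eq_zero_of_sum_conjTranspose_mul_self_eq_zero {𝕜 n ι : Type*} [RCLike 𝕜]
    [Fintype n] [Fintype ι] {B : ι → Matrix n n 𝕜} (h : ∑ i, (B i)ᴴ * B i = 0) (i : ι) :
    B i = 0 := by
  have hnonneg : ∀ j ∈ Finset.univ, 0 ≤ (B j)ᴴ * B j := fun j _ =>
    (posSemidef_conjTranspose_mul_self (B j)).nonneg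
  exact conjTranspose_mul_self_eq_zero.mp
    ((Finset.sum_eq_zero_iff_of_nonneg hnonneg).mp h i (Finset.mem_univ i))

lemma Matrix.mul_kraus_eq_smul_kraus_mul {𝕜 n ι : Type*} [RCLike 𝕜] [Fintype n] [DecidableEq n]
    [Fintype ι] {A : ι → Matrix n n 𝕜} {U : Matrix n n 𝕜} {β : 𝕜}
    (hunital : ∑ i, (A i)ᴴ * A i = 1) (heig : ∑ i, (A i)ᴴ * U * A i = β • U)
    (hU : Uᴴ * U = 1) (hβ : star β * β = 1) (i : ι) : U * A i = β • (A i * U) := by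
  have heig_adj : ∑ i, (A i)ᴴ * Uᴴ * A i = star β • Uᴴ := by
    simpa [conjTranspose_sum, conjTranspose_mul, Matrix.mul_assoc] using congrArg conjTranspose heig
  have hβ' : β * star β = 1 := by rwa [mul_comm]
  refine sub_eq_zero.mp
    (eq_zero_of_sum_conjTranspose_mul_self_eq_zero (B := fun j => U * A j - β • (A j * U)) ?_ i)
  calc ∑ i, (U * A i - β • (A i * U))ᴴ * (U * A i - β • (A i * U))
      = ∑ i, (A i)ᴴ * (Uᴴ * U) * A i - β • ((∑ i, (A i)ᴴ * Uᴴ * A i) * U)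
          - star β • (Uᴴ * ∑ i, (A i)ᴴ * U * A i)
          + (star β * β) • (Uᴴ * (∑ i, (A i)ᴴ * A i) * U) := by
        simp only [conjTranspose_sub, conjTranspose_smul, conjTranspose_mul, sub_mul, mul_sub,
          smul_mul_assoc, mul_smul_comm, Finset.sum_mul, Finset.mul_sum, Finset.smul_sum,
          ← Finset.sum_sub_distrib, ← Finset.sum_add_distrib, Matrix.mul_assoc]
        refine Finset.sum_congr rfl fun j _ => ?_
        module
    _ = 0 := by
        simp only [hU, Matrix.mul_one, hunital, heig_adj, heig, hβ, one_smul, smul_mul_assoc,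
          mul_smul_comm, smul_smul, hβ']
        abel

lemma IsPrimitiveRoot.pow_val_eq_mul_pow_val_iff {M : Type*} [CommMonoid M] {ζ : M} {m : ℕ}
    [NeZero m] (h : IsPrimitiveRoot ζ m) (k l : ZMod m) :
    ζ ^ k.val = ζ * ζ ^ l.val ↔ k = l + 1 := by
  have hshift : ζ * ζ ^ l.val = ζ ^ (l + 1).val := by
    rw [← pow_succ', ZMod.val_add, ZMod.val_one_eq_one_mod, Nat.add_mod_mod,
      ← pow_eq_pow_mod _ h.pow_eq_one]
  rw [hshift]
  exact ⟨fun heq => ZMod.val_injective m (h.pow_inj (ZMod.val_lt _) (ZMod.val_lt _) heq),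
    fun heq => heq ▸ rfl⟩

namespace OrthogonalIdempotents

variable {S R ι : Type*} [Field S] [Ring R] [Algebra S R] [Fintype ι] [DecidableEq ι]
  {P : ι → R}

lemma sum_smul_mul (hP : OrthogonalIdempotents P) (c : ι → S) (k : ι) :
    (∑ l, c l • P l) * P k = c k • P k := by
  simp only [Finset.sum_mul, smul_mul_assoc, hP.mul_eq, smul_ite, smul_zero,
    Finset.sum_ite_eq', Finset.mem_univ, if_true]

lemma mul_sum_smul (hP : OrthogonalIdempotents P) (c : ι → S) (k : ι) :
    P k * (∑ l, c l • P l) = c k • P k := by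
  simp only [Finset.mul_sum, mul_smul_comm, hP.mul_eq, smul_ite, smul_zero,
    Finset.sum_ite_eq, Finset.mem_univ, if_true]

lemma mul_mul_eq_zero_of_mul_eq_smul_mul (hP : OrthogonalIdempotents P) {c : ι → S} {β : S}
    {a : R} (hcomm : (∑ l, c l • P l) * a = β • (a * ∑ l, c l • P l)) {k l : ι}
    (hkl : c k ≠ β * c l) : P k * a * P l = 0 := by
  have hscale : c k • (P k * a * P l) = (β * c l) • (P k * a * P l) := calc
    c k • (P k * a * P l) = P k * ((∑ j, c j • P j) * a) * P l := by
      rw [← mul_assoc (P k), hP.mul_sum_smul, smul_mul_assoc, smul_mul_assoc]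
    _ = (β * c l) • (P k * a * P l) := by
      rw [hcomm, mul_smul_comm, smul_mul_assoc, mul_assoc, mul_assoc, hP.sum_smul_mul,
        mul_smul_comm, mul_smul_comm, smul_smul, ← mul_assoc]
  rw [← sub_eq_zero, ← sub_smul] at hscale
  exact (smul_eq_zero.mp hscale).resolve_left (sub_ne_zero.mpr hkl)

end OrthogonalIdempotents

lemma CompleteOrthogonalIdempotents.mul_sub_eq_mul {R ι : Type*} [Ring R] [Fintype ι]
    [AddGroup ι] {P : ι → R} (hP : CompleteOrthogonalIdempotents P) {a : R} {s : ι}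
    (hshift : ∀ k l, k ≠ l + s → P k * a * P l = 0) (k : ι) : a * P (k - s) = P k * a := by
  have hleft : P k * a * P (k - s) = a * P (k - s) := by
    rw [← Fintype.sum_eq_single (f := fun j => P j * a * P (k - s)) k
      (fun j hj => hshift j _ (by simpa using hj)), ← Finset.sum_mul, ← Finset.sum_mul,
      hP.complete, one_mul]
  have hright : P k * a * P (k - s) = P k * a := by
    rw [← Fintype.sum_eq_single (f := fun l => P k * a * P l) (k - s)
      (fun l hl => hshift k l (by rintro rfl; simp at hl)), ← Finset.mul_sum, hP.complete,
      mul_one]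
  exact hleft.symm.trans hright

theorem kraus_intertwining_relation_general (D r m : ℕ) [NeZero m]
    (A : Fin r → Matrix (Fin D) (Fin D) ℂ)
    (T : Module.End ℂ (Matrix (Fin D) (Fin D) ℂ))
    (hT : ∀ X, T X = ∑ i, (A i)ᴴ * X * A i)
    (hUnital : T 1 = 1)
    (β : ℂ) (hβ : β = Complex.exp (2 * Real.pi * Complex.I / m))
    (U : Matrix (Fin D) (Fin D) ℂ) (hU : U ∈ Matrix.unitaryGroup (Fin D) ℂ)
    (hEig : T U = β • U)
    (P : ZMod m → Matrix (Fin D) (Fin D) ℂ)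
    (hOrth : ∀ k l, k ≠ l → P k * P l = 0)
    (hSum : ∑ k, P k = 1)
    (hSpec : U = ∑ k, β ^ (k.val) • P k) :
    ∀ (i : Fin r) (k : ZMod m), A i * P (k - 1) = P k * A i := by
  have hβroot : IsPrimitiveRoot β m := hβ ▸ Complex.isPrimitiveRoot_exp m (NeZero.ne m)
  have hβnorm : star β * β = 1 := by
    rw [RCLike.star_def, RCLike.conj_mul, hβroot.norm'_eq_one (NeZero.ne m)]
    norm_num
  have hP : CompleteOrthogonalIdempotents P :=
    CompleteOrthogonalIdempotents.iff_ortho_complete.mpr ⟨hOrth, hSum⟩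
  have hKraus : ∑ i, (A i)ᴴ * A i = 1 := by simpa using (hT 1).symm.trans hUnital
  have hcomm (i : Fin r) : U * A i = β • (A i * U) :=
    mul_kraus_eq_smul_kraus_mul hKraus ((hT U).symm.trans hEig) (mem_unitaryGroup_iff'.mp hU)
      hβnorm i
  intro i k
  refine hP.mul_sub_eq_mul (fun j l hjl => ?_) k
  refine hP.toOrthogonalIdempotents.mul_mul_eq_zero_of_mul_eq_smul_mul (hSpec ▸ hcomm i) ?_
  exact mt (hβroot.pow_val_eq_mul_pow_val_iff j l).mp hjl

/-- Let `T(X) = ∑ᵢ Aᵢ† X Aᵢ` be an irreducible unital CP map on `M_D(ℂ)` with peripheral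
eigenvalue `β = e^{2πi/m}` and unitary eigenvector `U = ∑ₖ βᵏ Pₖ` (spectral projectors
`Pₖ`). Then the Kraus operators satisfy `Aᵢ P_{k−1} = Pₖ Aᵢ` for all `i, k` (mod `m`). -/
theorem kraus_intertwining_relation (D r m : ℕ) [NeZero m] (hm : m ≤ D)
    (A : Fin r → Matrix (Fin D) (Fin D) ℂ)
    (T : Module.End ℂ (Matrix (Fin D) (Fin D) ℂ))
    (hT : ∀ X, T X = ∑ i, (A i)ᴴ * X * A i)
    (hUnital : T 1 = 1)
    (hIrr : IsIrreducibleMap T)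
    (β : ℂ) (hβ : β = Complex.exp (2 * Real.pi * Complex.I / m))
    (U : Matrix (Fin D) (Fin D) ℂ) (hU : U ∈ Matrix.unitaryGroup (Fin D) ℂ)
    (hEig : T U = β • U)
    (P : ZMod m → Matrix (Fin D) (Fin D) ℂ)
    (hHerm : ∀ k, (P k)ᴴ = P k)
    (hIdem : ∀ k, P k * P k = P k)
    (hOrth : ∀ k l, k ≠ l → P k * P l = 0)
    (hSum : ∑ k, P k = 1)
    (hSpec : U = ∑ k, β ^ (k.val) • P k) :
    ∀ (i : Fin r) (k : ZMod m), A i * P (k - 1) = P k * A i :=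
  kraus_intertwining_relation_general D r m A T hT hUnital β hβ U hU hEig P hOrth hSum hSpec
end

section
/- Let T be an irreducible unital CP map of degree m, U = ∑_k β^k P_k the unitary eigenvector for β = e^{2πi/m}, and σ the positive definite fixed point of T (the right eigenvector for eigenvalue 1 of the predual). Then σ is block diagonal with respect to the projectors P_k: σ = ∑_{k=1}^m P_k σ P_k. -/
open Matrix ComplexOrder

/-!
Conjugating by the Kraus operators shifts the blocks cyclically, `Aᵢ Pₖ = Pₖ₊₁ Aᵢ`, so the
pinching `X ↦ ∑ₖ Pₖ X Pₖ` commutes with the predual map `S`. Hence the pinching of `σ` is again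
a fixed point of `S`; it has the same trace as `σ`, and since the fixed space of `S` is a line
on which the trace does not vanish (`tr σ > 0`), the two fixed points coincide.
-/

theorem Submodule.eq_of_finrank_eq_one_of_map_eq {K V : Type*} [Field K] [AddCommGroup V]
    [Module K V] {W : Submodule K V} (hW : Module.finrank K W = 1) (f : V →ₗ[K] K) {x y : V}
    (hx : x ∈ W) (hy : y ∈ W) (hfx : f x ≠ 0) (hf : f x = f y) : x = y := by
  have hx0 : (⟨x, hx⟩ : W) ≠ 0 := fun h ↦
    hfx (by rw [show x = 0 from congrArg Subtype.val h, map_zero])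
  obtain ⟨c, hc⟩ := exists_smul_eq_of_finrank_eq_one hW hx0 ⟨y, hy⟩
  have hcxy : c • x = y := congrArg Subtype.val hc
  have hc1 : c = 1 := by
    apply mul_right_cancel₀ hfx
    rw [one_mul, ← smul_eq_mul, ← map_smul, hcxy, hf]
  rw [← hcxy, hc1, one_smul]

namespace Matrix

variable {n ι κ R : Type*} [Fintype n] [Fintype ι]

theorem trace_sum_mul_mul_self [DecidableEq n] [CommSemiring R] (P : ι → Matrix n n R)
    (hIdem : ∀ k, P k * P k = P k) (hSum : ∑ k, P k = 1) (X : Matrix n n R) :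
    (∑ k, P k * X * P k).trace = X.trace := by
  calc (∑ k, P k * X * P k).trace = ∑ k, (P k * X).trace := by
        simp only [trace_sum, trace_mul_cycle, hIdem]
    _ = X.trace := by rw [← trace_sum, ← Finset.sum_mul, hSum, one_mul]

theorem sum_mul_sum_mul_conjTranspose_of_mul_eq [Fintype κ] [Semiring R] [StarRing R]
    (A : κ → Matrix n n R) (P : ι → Matrix n n R) (e : ι ≃ ι) (hHerm : ∀ k, (P k)ᴴ = P k)
    (hShift : ∀ k i, A i * P k = P (e k) * A i) (X : Matrix n n R) :
    ∑ i, A i * (∑ k, P k * X * P k) * (A i)ᴴ = ∑ k, P k * (∑ i, A i * X * (A i)ᴴ) * P k := by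
  have hShift' : ∀ k i, P k * (A i)ᴴ = (A i)ᴴ * P (e k) := fun k i ↦ by
    simpa [conjTranspose_mul, hHerm] using congrArg conjTranspose (hShift k i)
  calc ∑ i, A i * (∑ k, P k * X * P k) * (A i)ᴴ
      = ∑ i, ∑ k, P (e k) * (A i * X * (A i)ᴴ) * P (e k) := by
        refine Finset.sum_congr rfl fun i _ ↦ ?_
        rw [Finset.mul_sum, Finset.sum_mul]
        refine Finset.sum_congr rfl fun k _ ↦ ?_
        calc A i * (P k * X * P k) * (A i)ᴴ = A i * P k * X * (P k * (A i)ᴴ) := by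
              simp only [Matrix.mul_assoc]
          _ = P (e k) * A i * X * ((A i)ᴴ * P (e k)) := by rw [hShift, hShift']
          _ = P (e k) * (A i * X * (A i)ᴴ) * P (e k) := by simp only [Matrix.mul_assoc]
    _ = ∑ k, P (e k) * (∑ i, A i * X * (A i)ᴴ) * P (e k) := by
        rw [Finset.sum_comm]
        simp only [Finset.mul_sum, Finset.sum_mul]
    _ = ∑ k, P k * (∑ i, A i * X * (A i)ᴴ) * P k :=
        e.sum_comp fun k ↦ P k * (∑ i, A i * X * (A i)ᴴ) * P k

end Matrix

theorem fixed_point_block_diagonal_general (D r m : ℕ) [NeZero m]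
    (A : Fin r → Matrix (Fin D) (Fin D) ℂ)
    (S : Module.End ℂ (Matrix (Fin D) (Fin D) ℂ))
    (hS : ∀ X, S X = ∑ i, A i * X * (A i)ᴴ)
    (P : ZMod m → Matrix (Fin D) (Fin D) ℂ)
    (hHerm : ∀ k, (P k)ᴴ = P k)
    (hIdem : ∀ k, P k * P k = P k)
    (hSum : ∑ k, P k = 1)
    (hIntertwine : ∀ (k : ZMod m) (i : Fin r), P k * A i = A i * P (k - 1))
    (σ : Matrix (Fin D) (Fin D) ℂ) (hσ : σ.PosDef) (hFix : S σ = σ)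
    (hSimple : Module.finrank ℂ (S.eigenspace 1) = 1) :
    σ = ∑ k, P k * σ * P k := by
  cases isEmpty_or_nonempty (Fin D)
  · exact Subsingleton.elim _ _
  have hShift : ∀ k i, A i * P k = P (Equiv.addRight 1 k) * A i := fun k i ↦ by
    simpa using (hIntertwine (k + 1) i).symm
  have hPinchFix : S (∑ k, P k * σ * P k) = ∑ k, P k * σ * P k := by
    rw [hS, sum_mul_sum_mul_conjTranspose_of_mul_eq A P _ hHerm hShift, ← hS, hFix]
  refine Submodule.eq_of_finrank_eq_one_of_map_eq hSimple (traceLinearMap _ ℂ ℂ) ?_ ?_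
    hσ.trace_pos.ne' (trace_sum_mul_mul_self P hIdem hSum σ).symm
  · simpa using hFix
  · simpa using hPinchFix

/-- Let `T(X) = ∑ᵢ Aᵢ† X Aᵢ` be an irreducible unital CP map of degree `m`, with Kraus
intertwining relation `Pₖ Aᵢ = Aᵢ P_{k−1}` for the spectral projectors `Pₖ` of the unitary
eigenvector `U = ∑ₖ βᵏ Pₖ`, and let `σ` be the positive definite fixed point of the
predual map `S(X) = ∑ᵢ Aᵢ X Aᵢ†` (the eigenvalue `1` of `S` being nondegenerate, by
irreducibility). Then `σ` is block diagonal with respect to the `Pₖ`: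
`σ = ∑ₖ Pₖ σ Pₖ`. -/
theorem fixed_point_block_diagonal (D r m : ℕ) [NeZero m] (hm : m ≤ D)
    (A : Fin r → Matrix (Fin D) (Fin D) ℂ)
    (T S : Module.End ℂ (Matrix (Fin D) (Fin D) ℂ))
    (hT : ∀ X, T X = ∑ i, (A i)ᴴ * X * A i)
    (hS : ∀ X, S X = ∑ i, A i * X * (A i)ᴴ)
    (hUnital : T 1 = 1)
    (P : ZMod m → Matrix (Fin D) (Fin D) ℂ)
    (hHerm : ∀ k, (P k)ᴴ = P k)
    (hIdem : ∀ k, P k * P k = P k)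
    (hOrth : ∀ k l, k ≠ l → P k * P l = 0)
    (hSum : ∑ k, P k = 1)
    (hIntertwine : ∀ (k : ZMod m) (i : Fin r), P k * A i = A i * P (k - 1))
    (σ : Matrix (Fin D) (Fin D) ℂ) (hσ : σ.PosDef) (hFix : S σ = σ)
    (hSimple : Module.finrank ℂ (S.eigenspace 1) = 1) :
    σ = ∑ k, P k * σ * P k :=
  fixed_point_block_diagonal_general D r m A S hS P hHerm hIdem hSum hIntertwine σ hσ hFix hSimple
end

section
/- Let T be a CP map on M_D(ℂ). There exists a density matrix ρ (positive semidefinite, trace one) and μ ≥ 0 such that T(ρ) = μρ. -/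
open Matrix ComplexOrder

/-!
Positivity of `T` makes `b k = tr Tᵏ(1)` submultiplicative, because `Tʲ(1) ≤ b j • 1`.
Let `μ = inf_k (b k)^(1/k)`, so that `μ ^ k ≤ b k` for all `k`, while for every `c > μ` there are
arbitrarily large `N` with `b N ≤ c ^ N`. For such `N` the truncated resolvent
`x = ∑_{k<N} c⁻ᵏ Tᵏ(1)` is positive semidefinite, `c x - T x = c (1 - c⁻ᴺ Tᴺ(1))` has norm at
most `2c`, and `tr x ≥ ∑_{k<N} (μ/c)ᵏ` is of order `c / (c - μ)`. Hence `ρ = x / tr x` is a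
density matrix with `‖c ρ - T ρ‖ ≤ 4 (c - μ)`, and letting `c ↓ μ`, compactness of the set of
density matrices yields an exact eigenvector for `μ`.
-/

open Filter Finset
open scoped MatrixOrder Matrix.Norms.L2Operator

theorem IsCompact.exists_eq_zero_of_forall_exists_norm_le {X E : Type*} [TopologicalSpace X]
    [NormedAddCommGroup E] {f : X → E} {K : Set X} (hK : IsCompact K) (hf : ContinuousOn f K)
    (h : ∀ ε > 0, ∃ x ∈ K, ‖f x‖ ≤ ε) : ∃ x ∈ K, f x = 0 := by
  obtain ⟨x, hxK, hmin⟩ := hK.exists_isMinOn (let ⟨x, hx, _⟩ := h 1 one_pos; ⟨x, hx⟩)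
    (continuous_norm.comp_continuousOn hf)
  refine ⟨x, hxK, norm_le_zero_iff.1 <| le_of_forall_pos_le_add fun ε hε => ?_⟩
  obtain ⟨y, hyK, hy⟩ := h ε hε
  simpa using (hmin hyK).trans hy

theorem Module.End.smul_sub_apply_sum_inv_pow_smul {𝕜 V : Type*} [Field 𝕜] [AddCommGroup V]
    [Module 𝕜 V] (T : Module.End 𝕜 V) {c : 𝕜} (hc : c ≠ 0) (N : ℕ) (v : V) :
    c • ∑ k ∈ range N, (c ^ k)⁻¹ • (T ^ k) v - T (∑ k ∈ range N, (c ^ k)⁻¹ • (T ^ k) v) =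
      c • (v - (c ^ N)⁻¹ • (T ^ N) v) := by
  have hT : ∀ k, T ((c ^ k)⁻¹ • (T ^ k) v) = c • ((c ^ (k + 1))⁻¹ • (T ^ (k + 1)) v) :=
    fun k => by
      rw [map_smul, smul_smul, pow_succ' T, Module.End.mul_apply, pow_succ', mul_inv,
        mul_inv_cancel_left₀ hc]
  rw [map_sum, Finset.smul_sum, ← Finset.sum_sub_distrib]
  simp_rw [hT, ← smul_sub]
  rw [← Finset.smul_sum, Finset.sum_range_sub' (fun k => (c ^ k)⁻¹ • (T ^ k) v)]
  simp

noncomputable def growthRate (b : ℕ → ℝ) : ℝ := ⨅ k : ℕ, b (k + 1) ^ ((k + 1 : ℝ)⁻¹)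

section growthRate

variable {b : ℕ → ℝ}

theorem bddBelow_range_rpow_inv (hb : ∀ k, 0 ≤ b k) :
    BddBelow (Set.range fun k : ℕ => b (k + 1) ^ ((k + 1 : ℝ)⁻¹)) :=
  ⟨0, Set.forall_mem_range.2 fun _ => Real.rpow_nonneg (hb _) _⟩

theorem growthRate_nonneg (hb : ∀ k, 0 ≤ b k) : 0 ≤ growthRate b :=
  le_ciInf fun _ => Real.rpow_nonneg (hb _) _

theorem growthRate_pow_le (hb : ∀ k, 0 ≤ b k) (hb0 : 1 ≤ b 0) :
    ∀ k, growthRate b ^ k ≤ b k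
  | 0 => by simpa using hb0
  | k + 1 => calc
      growthRate b ^ (k + 1) ≤ (b (k + 1) ^ ((k + 1 : ℝ)⁻¹)) ^ (k + 1) :=
        pow_le_pow_left₀ (growthRate_nonneg hb) (ciInf_le (bddBelow_range_rpow_inv hb) k) _
      _ = b (k + 1) := by exact_mod_cast Real.rpow_inv_natCast_pow (hb _) k.succ_ne_zero

theorem apply_mul_le_pow_of_submultiplicative (hb : ∀ k, 0 ≤ b k)
    (hmul : ∀ j k, b (j + k) ≤ b j * b k) (K m : ℕ) : b ((m + 1) * K) ≤ b K ^ (m + 1) := by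
  induction m with
  | zero => simp
  | succ m ih =>
    calc b ((m + 2) * K) = b (K + (m + 1) * K) := by ring_nf
      _ ≤ b K * b ((m + 1) * K) := hmul _ _
      _ ≤ b K * b K ^ (m + 1) := mul_le_mul_of_nonneg_left ih (hb K)
      _ = b K ^ (m + 2) := by ring

theorem frequently_le_pow_of_growthRate_lt (hb : ∀ k, 0 ≤ b k)
    (hmul : ∀ j k, b (j + k) ≤ b j * b k) {c : ℝ} (hc : growthRate b < c) :
    ∃ᶠ N in atTop, b N ≤ c ^ N := by
  obtain ⟨k, hk⟩ := exists_lt_of_ciInf_lt hc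
  have hbk : b (k + 1) ≤ c ^ (k + 1) := by
    calc b (k + 1) = (b (k + 1) ^ ((k + 1 : ℝ)⁻¹)) ^ (k + 1) := by
          exact_mod_cast (Real.rpow_inv_natCast_pow (hb _) k.succ_ne_zero).symm
      _ ≤ c ^ (k + 1) := pow_le_pow_left₀ (Real.rpow_nonneg (hb _) _) hk.le _
  refine frequently_atTop.2 fun M => ⟨(M + 1) * (k + 1), by nlinarith, ?_⟩
  calc b ((M + 1) * (k + 1)) ≤ b (k + 1) ^ (M + 1) :=
        apply_mul_le_pow_of_submultiplicative hb hmul _ _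
    _ ≤ (c ^ (k + 1)) ^ (M + 1) := pow_le_pow_left₀ (hb _) hbk _
    _ = c ^ ((M + 1) * (k + 1)) := by ring

theorem exists_le_pow_and_lt_sum_inv_pow_mul (hb : ∀ k, 0 ≤ b k) (hb0 : 1 ≤ b 0)
    (hmul : ∀ j k, b (j + k) ≤ b j * b k) {c : ℝ} (hc : growthRate b < c) :
    ∃ N, b N ≤ c ^ N ∧ c / (2 * (c - growthRate b)) < ∑ k ∈ range N, (c ^ k)⁻¹ * b k := by
  set μ := growthRate b
  have hc0 : 0 < c := (growthRate_nonneg hb).trans_lt hc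
  set q := μ / c
  have hq1 : q < 1 := (div_lt_one hc0).2 hc
  have hlim := (hasSum_geometric_of_lt_one (div_nonneg (growthRate_nonneg hb) hc0.le)
    hq1).tendsto_sum_nat
  have hhalf : c / (2 * (c - μ)) < (1 - q)⁻¹ := by
    rw [show 1 - q = (c - μ) / c by simp only [q]; field_simp, inv_div]
    exact div_lt_div_of_pos_left hc0 (by linarith) (by linarith)
  obtain ⟨N, hbN, hN⟩ := ((frequently_le_pow_of_growthRate_lt hb hmul hc).and_eventually
    (hlim.eventually_const_lt hhalf)).exists
  refine ⟨N, hbN, hN.trans_le <| sum_le_sum fun k _ => ?_⟩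
  rw [div_pow, div_eq_inv_mul]
  exact mul_le_mul_of_nonneg_left (growthRate_pow_le hb hb0 k) (by positivity)

end growthRate

section Matrix

variable {n : Type*} [Fintype n] [DecidableEq n]

theorem Matrix.PosSemidef.posSemidef_trace_smul_one_sub {A : Matrix n n ℂ} (hA : A.PosSemidef) :
    (A.trace • (1 : Matrix n n ℂ) - A).PosSemidef := by
  set U := hA.1.eigenvectorUnitary
  set d := hA.1.eigenvalues
  have hdiag : (A.trace • (1 : Matrix n n ℂ) - diagonal (RCLike.ofReal ∘ d)).PosSemidef := by
    rw [smul_one_eq_diagonal, diagonal_sub, posSemidef_diagonal_iff]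
    intro i
    simp only [Function.comp_apply, hA.1.trace_eq_sum_eigenvalues, sub_nonneg]
    exact_mod_cast Finset.single_le_sum (fun j _ => hA.eigenvalues_nonneg j) (Finset.mem_univ i)
  have := hdiag.mul_mul_conjTranspose_same (U : Matrix n n ℂ)
  convert this using 1
  rw [mul_sub, sub_mul, mul_smul_comm, smul_mul_assoc, mul_one, ← star_eq_conjTranspose,
    Unitary.mul_star_self_of_mem U.2]
  congr 1
  exact hA.1.spectral_theorem

theorem Matrix.PosSemidef.norm_le_norm_trace {A : Matrix n n ℂ} (hA : A.PosSemidef) :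
    ‖A‖ ≤ ‖A.trace‖ := by
  cases isEmpty_or_nonempty n
  · simp [Subsingleton.elim A 0]
  calc ‖A‖ ≤ ‖A.trace • (1 : Matrix n n ℂ)‖ :=
        CStarAlgebra.norm_le_norm_of_nonneg_of_le (nonneg_iff_posSemidef.2 hA)
          (le_iff.2 hA.posSemidef_trace_smul_one_sub)
    _ = ‖A.trace‖ := by rw [norm_smul, norm_one, mul_one]

theorem Matrix.isClosed_setOf_posSemidef : IsClosed {A : Matrix n n ℂ | A.PosSemidef} := by
  simpa only [nonneg_iff_posSemidef] using CStarAlgebra.isClosed_nonneg (A := Matrix n n ℂ)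

theorem Matrix.isCompact_setOf_posSemidef_trace_eq_one :
    IsCompact {A : Matrix n n ℂ | A.PosSemidef ∧ A.trace = 1} := by
  refine Metric.isCompact_of_isClosed_isBounded ?_ ?_
  · exact isClosed_setOf_posSemidef.inter <|
      isClosed_eq (traceLinearMap n ℂ ℂ).continuous_of_finiteDimensional continuous_const
  · refine (Metric.isBounded_closedBall (x := 0) (r := 1)).subset fun A ⟨hA, htr⟩ => ?_
    simpa [htr] using hA.norm_le_norm_trace

end Matrix

theorem posSemidef_pow_apply {n : Type*} {T : Module.End ℂ (Matrix n n ℂ)}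
    (hT : ∀ X, X.PosSemidef → (T X).PosSemidef) (k : ℕ)
    {X : Matrix n n ℂ} (hX : X.PosSemidef) : ((T ^ k) X).PosSemidef := by
  induction k with
  | zero => simpa using hX
  | succ k ih => simpa only [pow_succ', Module.End.mul_apply] using hT _ ih

section PositiveMap

variable {n : Type*} [Fintype n] [DecidableEq n] {T : Module.End ℂ (Matrix n n ℂ)}

theorem norm_trace_pow_add_apply_one_le (hT : ∀ X, X.PosSemidef → (T X).PosSemidef) (j k : ℕ) :
    ‖((T ^ (j + k)) 1).trace‖ ≤ ‖((T ^ j) 1).trace‖ * ‖((T ^ k) 1).trace‖ := by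
  have hP := posSemidef_pow_apply hT j PosSemidef.one
  have hQ := (posSemidef_pow_apply hT k hP.posSemidef_trace_smul_one_sub).trace_nonneg
  rw [map_sub, map_smul, ← Module.End.mul_apply, ← pow_add, add_comm k, trace_sub, trace_smul,
    smul_eq_mul, sub_nonneg] at hQ
  rw [← norm_mul]
  exact CStarAlgebra.norm_le_norm_of_nonneg_of_le
    (posSemidef_pow_apply hT _ PosSemidef.one).trace_nonneg hQ

theorem trace_sum_inv_pow_smul_pow_apply_one (hT : ∀ X, X.PosSemidef → (T X).PosSemidef)
    (c : ℝ) (N : ℕ) :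
    (∑ k ∈ range N, ((c : ℂ) ^ k)⁻¹ • (T ^ k) 1).trace =
      ((∑ k ∈ range N, (c ^ k)⁻¹ * ‖((T ^ k) 1).trace‖ : ℝ) : ℂ) := by
  push_cast
  simp only [trace_sum, trace_smul, smul_eq_mul]
  exact sum_congr rfl fun k _ => by
    rw [← Complex.eq_coe_norm_of_nonneg (posSemidef_pow_apply hT k .one).trace_nonneg]

theorem exists_approx_eigenvector_of_growthRate_lt [Nonempty n]
    (hT : ∀ X, X.PosSemidef → (T X).PosSemidef) {c : ℝ}
    (hc : growthRate (fun k => ‖((T ^ k) 1).trace‖) < c) :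
    ∃ y : Matrix n n ℂ, y.PosSemidef ∧ y.trace = 1 ∧
      ‖(c : ℂ) • y - T y‖ ≤ 4 * (c - growthRate (fun k => ‖((T ^ k) 1).trace‖)) := by
  set b : ℕ → ℝ := fun k => ‖((T ^ k) 1).trace‖
  set μ := growthRate b
  have hb : ∀ k, 0 ≤ b k := fun _ => norm_nonneg _
  have hc0 : 0 < c := (growthRate_nonneg hb).trans_lt hc
  obtain ⟨N, hbN, ht⟩ := exists_le_pow_and_lt_sum_inv_pow_mul hb
    (by simp [b, Nat.one_le_iff_ne_zero]) (norm_trace_pow_add_apply_one_le hT) hc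
  set x := ∑ k ∈ range N, ((c : ℂ) ^ k)⁻¹ • (T ^ k) 1
  set t := ∑ k ∈ range N, (c ^ k)⁻¹ * b k
  have hx : x.PosSemidef := posSemidef_sum _ fun k _ =>
    (posSemidef_pow_apply hT k .one).smul (by norm_cast; positivity)
  have hxt : x.trace = t := trace_sum_inv_pow_smul_pow_apply_one hT c N
  have ht0 : 0 < t := lt_trans (by have := sub_pos.2 hc; positivity) ht
  refine ⟨(t : ℂ)⁻¹ • x, hx.smul (by norm_cast; positivity), ?_, ?_⟩
  · rw [trace_smul, hxt, smul_eq_mul, inv_mul_cancel₀ (by exact_mod_cast ht0.ne')]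
  have hres : (c : ℂ) • ((t : ℂ)⁻¹ • x) - T ((t : ℂ)⁻¹ • x) =
      (t : ℂ)⁻¹ • (c : ℂ) • (1 - ((c : ℂ) ^ N)⁻¹ • (T ^ N) 1) := by
    rw [map_smul, smul_comm, ← smul_sub,
      T.smul_sub_apply_sum_inv_pow_smul (by exact_mod_cast hc0.ne') N 1]
  have hTN : ‖((c : ℂ) ^ N)⁻¹ • (T ^ N) 1‖ ≤ 1 := by
    rw [norm_smul, norm_inv, norm_pow, Complex.norm_real, Real.norm_of_nonneg hc0.le,
      inv_mul_le_iff₀ (by positivity), mul_one]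
    exact (posSemidef_pow_apply hT N .one).norm_le_norm_trace.trans hbN
  calc ‖(c : ℂ) • ((t : ℂ)⁻¹ • x) - T ((t : ℂ)⁻¹ • x)‖
      ≤ t⁻¹ * (c * (‖(1 : Matrix n n ℂ)‖ + ‖((c : ℂ) ^ N)⁻¹ • (T ^ N) 1‖)) := by
        rw [hres, norm_smul, norm_smul, norm_inv, Complex.norm_real, Complex.norm_real,
          Real.norm_of_nonneg ht0.le, Real.norm_of_nonneg hc0.le]
        gcongr
        exact norm_sub_le _ _
    _ ≤ t⁻¹ * (c * 2) := by
        rw [norm_one]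
        gcongr
        linarith
    _ ≤ 4 * (c - μ) := by
        rw [inv_mul_le_iff₀ ht0]
        rw [div_lt_iff₀ (by linarith)] at ht
        nlinarith

theorem exists_posSemidef_trace_eq_one_eigenvector [Nonempty n]
    (hT : ∀ X, X.PosSemidef → (T X).PosSemidef) :
    ∃ (ρ : Matrix n n ℂ) (μ : ℝ), ρ.PosSemidef ∧ ρ.trace = 1 ∧ 0 ≤ μ ∧ T ρ = (μ : ℂ) • ρ := by
  set μ := growthRate (fun k => ‖((T ^ k) 1).trace‖)
  have happrox : ∀ ε > 0, ∃ y ∈ {A : Matrix n n ℂ | A.PosSemidef ∧ A.trace = 1},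
      ‖(μ : ℂ) • y - T y‖ ≤ ε := by
    intro ε hε
    obtain ⟨y, hy, hytr, hTy⟩ :=
      exists_approx_eigenvector_of_growthRate_lt hT (c := μ + ε / 5) (by linarith)
    refine ⟨y, ⟨hy, hytr⟩, ?_⟩
    have hyn : ‖y‖ ≤ 1 := by simpa [hytr] using hy.norm_le_norm_trace
    calc ‖(μ : ℂ) • y - T y‖ = ‖((μ + ε / 5 : ℝ) : ℂ) • y - T y - ((ε / 5 : ℝ) : ℂ) • y‖ := by
          congr 1; push_cast; module
      _ ≤ 4 * (μ + ε / 5 - μ) + ε / 5 * 1 := by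
          refine (norm_sub_le _ _).trans (add_le_add hTy ?_)
          rw [norm_smul, Complex.norm_real, Real.norm_of_nonneg (by positivity)]
          gcongr
      _ = ε := by ring
  obtain ⟨ρ, ⟨hρ, hρtr⟩, hTρ⟩ :=
    isCompact_setOf_posSemidef_trace_eq_one.exists_eq_zero_of_forall_exists_norm_le
      (by fun_prop) happrox
  exact ⟨ρ, μ, hρ, hρtr, growthRate_nonneg fun _ => norm_nonneg _, (sub_eq_zero.1 hTρ).symm⟩

end PositiveMap

theorem IsCPMap.posSemidef_apply {D : ℕ} {T : Module.End ℂ (Matrix (Fin D) (Fin D) ℂ)}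
    (hT : IsCPMap T) {X : Matrix (Fin D) (Fin D) ℂ} (hX : X.PosSemidef) : (T X).PosSemidef := by
  obtain ⟨r, A, hA⟩ := hT
  rw [hA X]
  exact posSemidef_sum _ fun i _ => hX.mul_mul_conjTranspose_same (A i)

/-- Every CP map on `M_D(ℂ)` has a density-matrix eigenvector: there exist a positive
semidefinite matrix `ρ` of trace one and `μ ≥ 0` with `T(ρ) = μρ`. -/
theorem cp_map_has_density_eigenvector (D : ℕ) (hD : 1 ≤ D)
    (T : Module.End ℂ (Matrix (Fin D) (Fin D) ℂ)) (hT : IsCPMap T) :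
    ∃ (ρ : Matrix (Fin D) (Fin D) ℂ) (μ : ℝ),
      ρ.PosSemidef ∧ ρ.trace = 1 ∧ 0 ≤ μ ∧ T ρ = (μ : ℂ) • ρ := by
  have : Nonempty (Fin D) := ⟨⟨0, hD⟩⟩
  exact exists_posSemidef_trace_eq_one_eigenvector fun _ => hT.posSemidef_apply
end
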